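/- Let φ be a smooth 2π-periodic function with zero mean, n ≥ 1, p ∈ H_n, and η ∈ [0,1]. Then ⟨A_φ p, p⟩ ≤ (1−η) λ_n(φ) ‖p‖² − (1/2) η ‖p_xx‖² + (9/2) η ‖φ_xx‖_∞² ‖p‖². -/

import Mathlib

open MeasureTheory Real Filter intervalIntegral
open scoped ContDiff

/-- The L² norm on [0,2π]. -/
noncomputable def L2norm (f : ℝ → ℝ) : ℝ :=
  Real.sqrt (∫ x in (0:ℝ)..(2*Real.pi), (f x)^2)

/-- The L² inner product on [0,2π]. -/
noncomputable def L2inner (f g : ℝ → ℝ) : ℝ :=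
  ∫ x in (0:ℝ)..(2*Real.pi), f x * g x

/-- The supremum norm on [0,2π]. -/
noncomputable def supNorm (f : ℝ → ℝ) : ℝ :=
  sSup ((fun x => |f x|) '' Set.Icc (0:ℝ) (2*Real.pi))

/-- The operator A_φ u = -∂_x⁴ u - 2 ∂_x³ (φ_x u). -/
noncomputable def Aop (φ u : ℝ → ℝ) : ℝ → ℝ :=
  fun x => -(iteratedDeriv 4 u x) - 2 * iteratedDeriv 3 (fun y => deriv φ y * u y) x

/-- Membership in 𝓗 (smooth part): smooth, 2π-periodic, zero mean on [0,2π]. -/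
def InH (u : ℝ → ℝ) : Prop :=
  ContDiff ℝ (⊤ : ℕ∞) u ∧ Function.Periodic u (2*Real.pi) ∧
    (∫ x in (0:ℝ)..(2*Real.pi), u x) = 0

/-- Membership in H_n: real trigonometric polynomials spanned by e^{ikx}, 1 ≤ |k| ≤ n. -/
def InHn (n : ℕ) (p : ℝ → ℝ) : Prop :=
  ∃ a b : ℕ → ℝ,
    p = fun x => ∑ k ∈ Finset.Icc 1 n, (a k * Real.cos (k*x) + b k * Real.sin (k*x))

/-- λ_n(φ) = sup { ⟨A_φ p, p⟩ : p ∈ H_n, ‖p‖ = 1 }. -/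
noncomputable def lamN (n : ℕ) (φ : ℝ → ℝ) : ℝ :=
  sSup {r : ℝ | ∃ p : ℝ → ℝ, InHn n p ∧ L2norm p = 1 ∧ r = L2inner (Aop φ p) p}

/-- λ(φ) = sup { ⟨A_φ u, u⟩ : u smooth in 𝓗, ‖u‖ = 1 }. -/
noncomputable def lam (φ : ℝ → ℝ) : ℝ :=
  sSup {r : ℝ | ∃ u : ℝ → ℝ, InH u ∧ L2norm u = 1 ∧ r = L2inner (Aop φ u) u}

/-- All Fourier coefficients ĉ_k of q vanish for |k| ≤ n. -/
def HighModes (n : ℕ) (q : ℝ → ℝ) : Prop :=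
  ∀ k : ℤ, |k| ≤ (n : ℤ) →
    (∫ x in (0:ℝ)..(2*Real.pi), (q x : ℂ) * Complex.exp (-Complex.I * (k:ℂ) * (x:ℂ))) = 0

lemma tp_pos : (0:ℝ) < 2*Real.pi := by positivity

lemma smooth_iter {f : ℝ → ℝ} (hf : ContDiff ℝ ∞ f) (k : ℕ) :
    ContDiff ℝ ∞ (iteratedDeriv k f) := by
  induction k with
  | zero => simpa [iteratedDeriv_zero]
  | succ k ih => rw [iteratedDeriv_succ]; exact (contDiff_infty_iff_deriv.1 ih).2

lemma periodic_deriv {f : ℝ → ℝ} {c : ℝ} (h : Function.Periodic f c) :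
    Function.Periodic (deriv f) c := by
  intro x
  have h1 : (fun y => f (y + c)) = f := funext fun y => h y
  calc deriv f (x + c) = deriv (fun y => f (y + c)) x := (deriv_comp_add_const f c x).symm
    _ = deriv f x := by rw [h1]

lemma periodic_iter {f : ℝ → ℝ} (h : Function.Periodic f (2*Real.pi)) (k : ℕ) :
    Function.Periodic (iteratedDeriv k f) (2*Real.pi) := by
  induction k with
  | zero => simpa [iteratedDeriv_zero]
  | succ k ih => rw [iteratedDeriv_succ]; exact periodic_deriv ih

lemma hda_iter {f : ℝ → ℝ} (hf : ContDiff ℝ ∞ f) (k : ℕ) (x : ℝ) :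
    HasDerivAt (iteratedDeriv k f) (iteratedDeriv (k+1) f x) x := by
  rw [iteratedDeriv_succ]
  exact (((smooth_iter hf k).differentiable (by norm_num)) x).hasDerivAt

lemma cont_iter {f : ℝ → ℝ} (hf : ContDiff ℝ ∞ f) (k : ℕ) :
    Continuous (iteratedDeriv k f) := (smooth_iter hf k).continuous

/-- Integration by parts for periodic smooth functions. -/
lemma ibp {u v : ℝ → ℝ} (hu : ContDiff ℝ ∞ u) (hv : ContDiff ℝ ∞ v)
    (hpu : Function.Periodic u (2*Real.pi)) (hpv : Function.Periodic v (2*Real.pi)) :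
    ∫ x in (0:ℝ)..(2*Real.pi), deriv u x * v x
      = -∫ x in (0:ℝ)..(2*Real.pi), u x * deriv v x := by
  have hdu : Differentiable ℝ u := hu.differentiable (by norm_num)
  have hdv : Differentiable ℝ v := hv.differentiable (by norm_num)
  have hcu' : Continuous (deriv u) := (contDiff_infty_iff_deriv.1 hu).2.continuous
  have hcv' : Continuous (deriv v) := (contDiff_infty_iff_deriv.1 hv).2.continuous
  have h := intervalIntegral.integral_deriv_mul_eq_sub_of_hasDerivAt
    (u := u) (v := v) (u' := deriv u) (v' := deriv v) (a := (0:ℝ)) (b := 2*Real.pi)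
    (hdu.continuous.continuousOn) (hdv.continuous.continuousOn)
    (fun x _ => (hdu x).hasDerivAt) (fun x _ => (hdv x).hasDerivAt)
    (hcu'.intervalIntegrable _ _) (hcv'.intervalIntegrable _ _)
  have hb : u (2*Real.pi) * v (2*Real.pi) - u 0 * v 0 = 0 := by
    have h1 : u (2*Real.pi) = u 0 := by have := hpu 0; simpa using this
    have h2 : v (2*Real.pi) = v 0 := by have := hpv 0; simpa using this
    rw [h1, h2]; ring
  rw [hb] at h
  have hs : IntervalIntegrable (fun x => deriv u x * v x) volume 0 (2*Real.pi) :=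
    (hcu'.mul hdv.continuous).intervalIntegrable _ _
  have ht : IntervalIntegrable (fun x => u x * deriv v x) volume 0 (2*Real.pi) :=
    (hdu.continuous.mul hcv').intervalIntegrable _ _
  rw [intervalIntegral.integral_add hs ht] at h
  linarith

-- sup-norm facts
lemma le_supNorm {f : ℝ → ℝ} (hf : Continuous f) {x : ℝ}
    (hx : x ∈ Set.Icc (0:ℝ) (2*Real.pi)) : |f x| ≤ supNorm f := by
  apply le_csSup
  · exact (isCompact_Icc.bddAbove_image ((continuous_abs.comp hf).continuousOn))
  · exact Set.mem_image_of_mem _ hx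

lemma supNorm_nonneg {f : ℝ → ℝ} (hf : Continuous f) : 0 ≤ supNorm f :=
  le_trans (abs_nonneg _) (le_supNorm hf ⟨le_refl 0, le_of_lt tp_pos⟩)

-- L2 facts
lemma L2norm_nonneg (f : ℝ → ℝ) : 0 ≤ L2norm f := Real.sqrt_nonneg _

lemma L2norm_sq {f : ℝ → ℝ} (hf : Continuous f) :
    (L2norm f)^2 = ∫ x in (0:ℝ)..(2*Real.pi), (f x)^2 := by
  apply Real.sq_sqrt
  apply intervalIntegral.integral_nonneg (le_of_lt tp_pos)
  intro x _; positivity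

/-- Cauchy–Schwarz for continuous functions on [0,2π]. -/
lemma cauchy_schwarz {f g : ℝ → ℝ} (hf : Continuous f) (hg : Continuous g) :
    (∫ x in (0:ℝ)..(2*Real.pi), |f x * g x|) ≤ L2norm f * L2norm g := by
  set A := ∫ x in (0:ℝ)..(2*Real.pi), (f x)^2 with hA
  set C := ∫ x in (0:ℝ)..(2*Real.pi), (g x)^2 with hC
  set B := ∫ x in (0:ℝ)..(2*Real.pi), |f x * g x| with hB
  have hAnn : 0 ≤ A := intervalIntegral.integral_nonneg (le_of_lt tp_pos) (fun x _ => by positivity)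
  have hCnn : 0 ≤ C := intervalIntegral.integral_nonneg (le_of_lt tp_pos) (fun x _ => by positivity)
  have hif : IntervalIntegrable (fun x => (f x)^2) volume 0 (2*Real.pi) :=
    ((hf.pow 2)).intervalIntegrable _ _
  have hig : IntervalIntegrable (fun x => (g x)^2) volume 0 (2*Real.pi) :=
    ((hg.pow 2)).intervalIntegrable _ _
  have hifg : IntervalIntegrable (fun x => |f x * g x|) volume 0 (2*Real.pi) :=
    ((hf.mul hg).abs).intervalIntegrable _ _
  have key : ∀ t : ℝ, 0 ≤ t^2 * A - 2*t*B + C := by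
    intro t
    have hexp : ∀ x : ℝ, (t * |f x| - |g x|)^2
        = t^2 * (f x)^2 - 2*t*|f x * g x| + (g x)^2 := by
      intro x
      have h1 : |f x| * |g x| = |f x * g x| := (abs_mul _ _).symm
      have h2 : |f x|^2 = (f x)^2 := sq_abs _
      have h3 : |g x|^2 = (g x)^2 := sq_abs _
      have h4 : (t * |f x| - |g x|)^2
          = t^2 * |f x|^2 - 2*t*(|f x| * |g x|) + |g x|^2 := by ring
      rw [h4, h1, h2, h3]
    have h0 : 0 ≤ ∫ x in (0:ℝ)..(2*Real.pi), (t * |f x| - |g x|)^2 :=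
      intervalIntegral.integral_nonneg (le_of_lt tp_pos) (fun x _ => by positivity)
    have heq : (∫ x in (0:ℝ)..(2*Real.pi), (t * |f x| - |g x|)^2)
        = t^2 * A - 2*t*B + C := by
      rw [intervalIntegral.integral_congr (g := fun x => t^2 * (f x)^2 - 2*t*|f x * g x| + (g x)^2)
        (fun x _ => hexp x)]
      rw [intervalIntegral.integral_add ((hif.const_mul _).sub (hifg.const_mul _)) hig,
        intervalIntegral.integral_sub (hif.const_mul _) (hifg.const_mul _),
        intervalIntegral.integral_const_mul, intervalIntegral.integral_const_mul]
    linarith [heq ▸ h0]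
  have hB2 : B^2 ≤ A * C := by
    rcases eq_or_lt_of_le hAnn with h | h
    · -- A = 0 : then B = 0
      have hBnn : 0 ≤ B :=
        intervalIntegral.integral_nonneg (le_of_lt tp_pos) (fun x _ => abs_nonneg _)
      have hB0 : B = 0 := by
        by_contra hne
        have hBpos : 0 < B := lt_of_le_of_ne hBnn (Ne.symm hne)
        have hk := key ((C+1) / (2*B))
        rw [← h] at hk
        have he : ((C+1)/(2*B))^2 * 0 - 2*((C+1)/(2*B))*B + C = -1 := by
          field_simp; ring
        rw [he] at hk; linarith
      rw [hB0, ← h]; nlinarith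
    · have hk := key (B / A)
      have hA0 : A ≠ 0 := ne_of_gt h
      have he : (B/A)^2 * A - 2*(B/A)*B + C = C - B^2/A := by
        field_simp; ring
      rw [he] at hk
      have : B^2 / A ≤ C := by linarith
      calc B^2 = B^2/A * A := by field_simp
        _ ≤ C * A := mul_le_mul_of_nonneg_right this hAnn
        _ = A * C := mul_comm _ _
  have : B ≤ Real.sqrt (A*C) := by
    have hBnn : 0 ≤ B :=
      intervalIntegral.integral_nonneg (le_of_lt tp_pos) (fun x _ => abs_nonneg _)
    nlinarith [Real.sq_sqrt (mul_nonneg hAnn hCnn), Real.sqrt_nonneg (A*C), hB2,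
      sq_nonneg (B - Real.sqrt (A*C))]
  calc B ≤ Real.sqrt (A*C) := this
    _ = L2norm f * L2norm g := by rw [Real.sqrt_mul hAnn]; rfl

lemma InHn.smooth {n : ℕ} {p : ℝ → ℝ} (hp : InHn n p) : ContDiff ℝ ∞ p := by
  obtain ⟨a, b, rfl⟩ := hp
  apply ContDiff.sum
  intro k _
  have h1 : ContDiff ℝ ∞ (fun x : ℝ => (k:ℝ) * x) := contDiff_const.mul contDiff_id
  exact (contDiff_const.mul (Real.contDiff_cos.comp h1)).add
    (contDiff_const.mul (Real.contDiff_sin.comp h1))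

lemma InHn.periodic {n : ℕ} {p : ℝ → ℝ} (hp : InHn n p) :
    Function.Periodic p (2*Real.pi) := by
  obtain ⟨a, b, rfl⟩ := hp
  intro x
  apply Finset.sum_congr rfl
  intro k _
  have h1 : (k:ℝ) * (x + 2*Real.pi) = k*x + (k:ℤ) * (2*Real.pi) := by push_cast; ring
  rw [h1, Real.cos_add_int_mul_two_pi, Real.sin_add_int_mul_two_pi]

lemma iter_const_mul {f : ℝ → ℝ} (hf : ContDiff ℝ ∞ f) (c : ℝ) (k : ℕ) :
    iteratedDeriv k (fun y => c * f y) = fun x => c * iteratedDeriv k f x := by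
  induction k with
  | zero => simp [iteratedDeriv_zero]
  | succ k ih =>
    rw [iteratedDeriv_succ, ih, iteratedDeriv_succ]
    funext x
    exact deriv_const_mul c (((smooth_iter hf k).differentiable (by norm_num)) x)

lemma ibp_iter {u v : ℝ → ℝ} (hu : ContDiff ℝ ∞ u) (hpu : Function.Periodic u (2*Real.pi))
    (hv : ContDiff ℝ ∞ v) (hpv : Function.Periodic v (2*Real.pi)) (j k : ℕ) :
    ∫ x in (0:ℝ)..(2*Real.pi), iteratedDeriv (j+1) u x * iteratedDeriv k v x
      = -∫ x in (0:ℝ)..(2*Real.pi), iteratedDeriv j u x * iteratedDeriv (k+1) v x := by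
  have h := ibp (smooth_iter hu j) (smooth_iter hv k) (periodic_iter hpu j) (periodic_iter hpv k)
  simpa [← iteratedDeriv_succ] using h

lemma keyIdentity {φ p : ℝ → ℝ} (hφs : ContDiff ℝ ∞ φ) (hφp : Function.Periodic φ (2*Real.pi))
    (hps : ContDiff ℝ ∞ p) (hpp : Function.Periodic p (2*Real.pi)) :
    L2inner (Aop φ p) p
      = -(∫ x in (0:ℝ)..(2*Real.pi), (iteratedDeriv 2 p x)^2)
        - 2 * (∫ x in (0:ℝ)..(2*Real.pi),
            iteratedDeriv 2 φ x * (p x * iteratedDeriv 2 p x))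
        + ∫ x in (0:ℝ)..(2*Real.pi), iteratedDeriv 2 φ x * (iteratedDeriv 1 p x)^2 := by
  set g : ℝ → ℝ := fun y => deriv φ y * p y with hg
  have hφ' : ContDiff ℝ ∞ (deriv φ) := (contDiff_infty_iff_deriv.1 hφs).2
  have hgs : ContDiff ℝ ∞ g := hφ'.mul hps
  have hgp : Function.Periodic g (2*Real.pi) := by
    intro x; simp only [hg]; rw [periodic_deriv hφp x, hpp x]
  -- split the inner product
  have hc4 : Continuous (iteratedDeriv 4 p) := cont_iter hps 4
  have hc3g : Continuous (iteratedDeriv 3 g) := cont_iter hgs 3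
  have hcp : Continuous p := hps.continuous
  have hsplit : L2inner (Aop φ p) p
      = -(∫ x in (0:ℝ)..(2*Real.pi), iteratedDeriv 4 p x * p x)
        - 2 * ∫ x in (0:ℝ)..(2*Real.pi), iteratedDeriv 3 g x * p x := by
    unfold L2inner Aop
    rw [intervalIntegral.integral_congr (g := fun x =>
      -(iteratedDeriv 4 p x * p x) - 2 * (iteratedDeriv 3 g x * p x))
      (fun x _ => by simp only [hg]; ring)]
    rw [intervalIntegral.integral_sub (f := fun x => -(iteratedDeriv 4 p x * p x))
      (g := fun x => 2 * (iteratedDeriv 3 g x * p x)) (((hc4.mul hcp).neg).intervalIntegrable _ _)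
      ((continuous_const.mul (hc3g.mul hcp)).intervalIntegrable _ _),
      intervalIntegral.integral_neg, intervalIntegral.integral_const_mul]
  -- ∫ p'''' p = ∫ (p'')²
  have h4 : (∫ x in (0:ℝ)..(2*Real.pi), iteratedDeriv 4 p x * p x)
      = ∫ x in (0:ℝ)..(2*Real.pi), (iteratedDeriv 2 p x)^2 := by
    have e1 : (∫ x in (0:ℝ)..(2*Real.pi), iteratedDeriv 4 p x * p x)
        = ∫ x in (0:ℝ)..(2*Real.pi), iteratedDeriv 4 p x * iteratedDeriv 0 p x := by
      simp [iteratedDeriv_zero]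
    rw [e1, show (4:ℕ) = 3 + 1 by rfl, ibp_iter hps hpp hps hpp 3 0,
      show (3:ℕ) = 2 + 1 by rfl, ibp_iter hps hpp hps hpp 2 1]
    rw [neg_neg]
    apply intervalIntegral.integral_congr
    intro x _; norm_num [sq]
  -- ∫ g''' p = ∫ g' p''
  have h3 : (∫ x in (0:ℝ)..(2*Real.pi), iteratedDeriv 3 g x * p x)
      = ∫ x in (0:ℝ)..(2*Real.pi), iteratedDeriv 1 g x * iteratedDeriv 2 p x := by
    have e1 : (∫ x in (0:ℝ)..(2*Real.pi), iteratedDeriv 3 g x * p x)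
        = ∫ x in (0:ℝ)..(2*Real.pi), iteratedDeriv 3 g x * iteratedDeriv 0 p x := by
      simp [iteratedDeriv_zero]
    rw [e1, show (3:ℕ) = 2 + 1 by rfl, ibp_iter hgs hgp hps hpp 2 0,
      show (2:ℕ) = 1 + 1 by rfl, ibp_iter hgs hgp hps hpp 1 1, neg_neg]
  -- g' = φ'' p + φ' p'
  have hg' : ∀ x, iteratedDeriv 1 g x
      = iteratedDeriv 2 φ x * p x + iteratedDeriv 1 φ x * iteratedDeriv 1 p x := by
    intro x
    have hdφ : HasDerivAt (deriv φ) (iteratedDeriv 2 φ x) x := by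
      have := hda_iter hφs 1 x; rwa [iteratedDeriv_one] at this
    have hdp : HasDerivAt p (iteratedDeriv 1 p x) x := by
      have := hda_iter hps 0 x; rwa [iteratedDeriv_zero] at this
    have : HasDerivAt g (iteratedDeriv 2 φ x * p x + deriv φ x * iteratedDeriv 1 p x) x :=
      hdφ.mul hdp
    rw [iteratedDeriv_one, this.deriv]
    simp [iteratedDeriv_one]
  -- split ∫ g' p''
  have hc2φ : Continuous (iteratedDeriv 2 φ) := cont_iter hφs 2
  have hc1φ : Continuous (iteratedDeriv 1 φ) := cont_iter hφs 1
  have hc1p : Continuous (iteratedDeriv 1 p) := cont_iter hps 1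
  have hc2p : Continuous (iteratedDeriv 2 p) := cont_iter hps 2
  have hsplit2 : (∫ x in (0:ℝ)..(2*Real.pi), iteratedDeriv 1 g x * iteratedDeriv 2 p x)
      = (∫ x in (0:ℝ)..(2*Real.pi), iteratedDeriv 2 φ x * (p x * iteratedDeriv 2 p x))
        + ∫ x in (0:ℝ)..(2*Real.pi),
            iteratedDeriv 1 φ x * (iteratedDeriv 1 p x * iteratedDeriv 2 p x) := by
    rw [intervalIntegral.integral_congr (g := fun x =>
      iteratedDeriv 2 φ x * (p x * iteratedDeriv 2 p x)
        + iteratedDeriv 1 φ x * (iteratedDeriv 1 p x * iteratedDeriv 2 p x))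
      (fun x _ => by rw [hg' x]; ring)]
    exact intervalIntegral.integral_add
      ((hc2φ.mul (hcp.mul hc2p)).intervalIntegrable _ _)
      ((hc1φ.mul (hc1p.mul hc2p)).intervalIntegrable _ _)
  -- ∫ φ' p' p'' = -(1/2) ∫ φ'' (p')²
  have hlast : (∫ x in (0:ℝ)..(2*Real.pi),
        iteratedDeriv 1 φ x * (iteratedDeriv 1 p x * iteratedDeriv 2 p x))
      = -(1/2) * ∫ x in (0:ℝ)..(2*Real.pi), iteratedDeriv 2 φ x * (iteratedDeriv 1 p x)^2 := by
    set w : ℝ → ℝ := fun x => (iteratedDeriv 1 p x)^2 with hw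
    have hws : ContDiff ℝ ∞ w := (smooth_iter hps 1).pow 2
    have hwp : Function.Periodic w (2*Real.pi) := by
      intro x; simp only [hw]; rw [periodic_iter hpp 1 x]
    have hibp := ibp hws (smooth_iter hφs 1) hwp (periodic_iter hφp 1)
    have hdw : ∀ x, deriv w x = 2 * (iteratedDeriv 1 p x * iteratedDeriv 2 p x) := by
      intro x
      have hdp1 : HasDerivAt (iteratedDeriv 1 p) (iteratedDeriv 2 p x) x := hda_iter hps 1 x
      have h2 : HasDerivAt (fun y => iteratedDeriv 1 p y * iteratedDeriv 1 p y)
          (iteratedDeriv 2 p x * iteratedDeriv 1 p x + iteratedDeriv 1 p x * iteratedDeriv 2 p x)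
          x := hdp1.mul hdp1
      have h3 : w = fun y => iteratedDeriv 1 p y * iteratedDeriv 1 p y := by
        funext y; simp only [hw]; ring
      rw [h3, h2.deriv]; ring
    have hdφ1 : ∀ x, deriv (iteratedDeriv 1 φ) x = iteratedDeriv 2 φ x := by
      intro x; rw [← iteratedDeriv_succ]
    have e1 : (∫ x in (0:ℝ)..(2*Real.pi), deriv w x * iteratedDeriv 1 φ x)
        = 2 * ∫ x in (0:ℝ)..(2*Real.pi),
            iteratedDeriv 1 φ x * (iteratedDeriv 1 p x * iteratedDeriv 2 p x) := by
      rw [← intervalIntegral.integral_const_mul]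
      apply intervalIntegral.integral_congr
      intro x _
      show deriv w x * iteratedDeriv 1 φ x
        = 2 * (iteratedDeriv 1 φ x * (iteratedDeriv 1 p x * iteratedDeriv 2 p x))
      rw [hdw x]; ring
    have e2 : (∫ x in (0:ℝ)..(2*Real.pi), w x * deriv (iteratedDeriv 1 φ) x)
        = ∫ x in (0:ℝ)..(2*Real.pi), iteratedDeriv 2 φ x * (iteratedDeriv 1 p x)^2 := by
      apply intervalIntegral.integral_congr
      intro x _
      show w x * deriv (iteratedDeriv 1 φ) x = iteratedDeriv 2 φ x * (iteratedDeriv 1 p x)^2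
      rw [hdφ1 x]; simp only [hw]; ring
    rw [e1, e2] at hibp
    linarith
  rw [hsplit, h4, h3, hsplit2, hlast]
  ring

lemma boundB {φ p : ℝ → ℝ} (hφs : ContDiff ℝ ∞ φ) (hφp : Function.Periodic φ (2*Real.pi))
    (hps : ContDiff ℝ ∞ p) (hpp : Function.Periodic p (2*Real.pi)) :
    L2inner (Aop φ p) p ≤ -(1/2) * (L2norm (iteratedDeriv 2 p))^2
      + (9/2) * (supNorm (iteratedDeriv 2 φ))^2 * (L2norm p)^2 := by
  have hcp : Continuous p := hps.continuous
  have hc1p : Continuous (iteratedDeriv 1 p) := cont_iter hps 1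
  have hc2p : Continuous (iteratedDeriv 2 p) := cont_iter hps 2
  have hc2φ : Continuous (iteratedDeriv 2 φ) := cont_iter hφs 2
  set M := supNorm (iteratedDeriv 2 φ) with hM
  set a := L2norm (iteratedDeriv 2 p) with ha
  set b := L2norm p with hb
  have hMnn : 0 ≤ M := supNorm_nonneg hc2φ
  have hann : 0 ≤ a := L2norm_nonneg _
  have hbnn : 0 ≤ b := L2norm_nonneg _
  have ha2 : a^2 = ∫ x in (0:ℝ)..(2*Real.pi), (iteratedDeriv 2 p x)^2 := L2norm_sq hc2p
  set S := ∫ x in (0:ℝ)..(2*Real.pi), |p x * iteratedDeriv 2 p x| with hS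
  have hSle : S ≤ b * a := cauchy_schwarz hcp hc2p
  have hMx : ∀ x ∈ Set.Icc (0:ℝ) (2*Real.pi), |iteratedDeriv 2 φ x| ≤ M :=
    fun x hx => le_supNorm hc2φ hx
  -- term 1
  have hT1 : -(2 * ∫ x in (0:ℝ)..(2*Real.pi), iteratedDeriv 2 φ x * (p x * iteratedDeriv 2 p x))
      ≤ 2 * M * S := by
    have hmono : (∫ x in (0:ℝ)..(2*Real.pi),
          -(2 * (iteratedDeriv 2 φ x * (p x * iteratedDeriv 2 p x))))
        ≤ ∫ x in (0:ℝ)..(2*Real.pi), 2 * M * |p x * iteratedDeriv 2 p x| := by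
      apply intervalIntegral.integral_mono_on (le_of_lt tp_pos)
      · exact ((continuous_const.mul (hc2φ.mul (hcp.mul hc2p))).neg).intervalIntegrable _ _
      · exact (continuous_const.mul ((hcp.mul hc2p).abs)).intervalIntegrable _ _
      · intro x hx
        have h1 : -(iteratedDeriv 2 φ x * (p x * iteratedDeriv 2 p x))
            ≤ |iteratedDeriv 2 φ x| * |p x * iteratedDeriv 2 p x| := by
          rw [← abs_mul]
          exact neg_le_of_neg_le (neg_abs_le _)
        have h2 : |iteratedDeriv 2 φ x| * |p x * iteratedDeriv 2 p x|
            ≤ M * |p x * iteratedDeriv 2 p x| :=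
          mul_le_mul_of_nonneg_right (hMx x hx) (abs_nonneg _)
        nlinarith [abs_nonneg (p x * iteratedDeriv 2 p x)]
    rw [intervalIntegral.integral_neg, intervalIntegral.integral_const_mul,
      intervalIntegral.integral_const_mul] at hmono
    linarith
  -- term 2
  have hT2 : (∫ x in (0:ℝ)..(2*Real.pi), iteratedDeriv 2 φ x * (iteratedDeriv 1 p x)^2)
      ≤ M * S := by
    have h1 : (∫ x in (0:ℝ)..(2*Real.pi), iteratedDeriv 2 φ x * (iteratedDeriv 1 p x)^2)
        ≤ M * ∫ x in (0:ℝ)..(2*Real.pi), (iteratedDeriv 1 p x)^2 := by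
      rw [← intervalIntegral.integral_const_mul]
      apply intervalIntegral.integral_mono_on (le_of_lt tp_pos)
      · exact (hc2φ.mul (hc1p.pow 2)).intervalIntegrable _ _
      · exact (continuous_const.mul (hc1p.pow 2)).intervalIntegrable _ _
      · intro x hx
        have := hMx x hx
        have h2 : iteratedDeriv 2 φ x ≤ M := le_trans (le_abs_self _) this
        nlinarith [sq_nonneg (iteratedDeriv 1 p x)]
    have h3 : (∫ x in (0:ℝ)..(2*Real.pi), (iteratedDeriv 1 p x)^2)
        = -∫ x in (0:ℝ)..(2*Real.pi), p x * iteratedDeriv 2 p x := by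
      have e1 : (∫ x in (0:ℝ)..(2*Real.pi), (iteratedDeriv 1 p x)^2)
          = ∫ x in (0:ℝ)..(2*Real.pi), iteratedDeriv 1 p x * iteratedDeriv 1 p x := by
        apply intervalIntegral.integral_congr; intro x _; simp [sq]
      have e2 := ibp_iter hps hpp hps hpp 0 1
      simp only [iteratedDeriv_zero] at e2
      rw [e1]
      have e3 : (∫ x in (0:ℝ)..(2*Real.pi), iteratedDeriv 1 p x * iteratedDeriv 1 p x)
          = ∫ x in (0:ℝ)..(2*Real.pi), iteratedDeriv (0+1) p x * iteratedDeriv 1 p x := by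
        norm_num
      rw [e3, ibp_iter hps hpp hps hpp 0 1]
      simp [iteratedDeriv_zero]
    have h4 : -(∫ x in (0:ℝ)..(2*Real.pi), p x * iteratedDeriv 2 p x) ≤ S := by
      have hmono : (∫ x in (0:ℝ)..(2*Real.pi), -(p x * iteratedDeriv 2 p x))
          ≤ ∫ x in (0:ℝ)..(2*Real.pi), |p x * iteratedDeriv 2 p x| := by
        apply intervalIntegral.integral_mono_on (le_of_lt tp_pos)
        · exact ((hcp.mul hc2p).neg).intervalIntegrable _ _
        · exact ((hcp.mul hc2p).abs).intervalIntegrable _ _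
        · intro x _; exact neg_le_of_neg_le (neg_abs_le _)
      rw [intervalIntegral.integral_neg] at hmono
      exact hmono
    calc (∫ x in (0:ℝ)..(2*Real.pi), iteratedDeriv 2 φ x * (iteratedDeriv 1 p x)^2)
        ≤ M * ∫ x in (0:ℝ)..(2*Real.pi), (iteratedDeriv 1 p x)^2 := h1
      _ ≤ M * S := by
          apply mul_le_mul_of_nonneg_left _ hMnn
          rw [h3]; exact h4
  have hid := keyIdentity hφs hφp hps hpp
  have hSab : 2 * M * S + M * S ≤ 3 * M * (b * a) := by nlinarith
  rw [hid, ← ha2]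
  nlinarith [sq_nonneg (a - 3*M*b), sq_nonneg a, mul_nonneg hMnn (mul_nonneg hbnn hann)]

lemma InHn.const_mul {n : ℕ} {p : ℝ → ℝ} (hp : InHn n p) (c : ℝ) :
    InHn n (fun x => c * p x) := by
  obtain ⟨a, b, rfl⟩ := hp
  exact ⟨fun k => c * a k, fun k => c * b k, by
    funext x; rw [Finset.mul_sum]; apply Finset.sum_congr rfl; intro k _; ring⟩

lemma L2norm_const_mul {p : ℝ → ℝ} (hp : Continuous p) (c : ℝ) :
    L2norm (fun x => c * p x) = |c| * L2norm p := by
  unfold L2norm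
  rw [intervalIntegral.integral_congr (g := fun x => c^2 * (p x)^2) (fun x _ => by ring),
    intervalIntegral.integral_const_mul, Real.sqrt_mul (sq_nonneg c), Real.sqrt_sq_eq_abs]

lemma Aop_const_mul {φ p : ℝ → ℝ} (hφs : ContDiff ℝ ∞ φ) (hps : ContDiff ℝ ∞ p) (c : ℝ) :
    Aop φ (fun x => c * p x) = fun x => c * Aop φ p x := by
  have hφ' : ContDiff ℝ ∞ (deriv φ) := (contDiff_infty_iff_deriv.1 hφs).2
  have hgs : ContDiff ℝ ∞ (fun y => deriv φ y * p y) := hφ'.mul hps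
  funext x
  unfold Aop
  have h1 : iteratedDeriv 4 (fun x => c * p x) = fun x => c * iteratedDeriv 4 p x :=
    iter_const_mul hps c 4
  have h2 : (fun y => deriv φ y * (c * p y)) = fun y => c * (deriv φ y * p y) := by
    funext y; ring
  have h3 : iteratedDeriv 3 (fun y => c * (deriv φ y * p y))
      = fun x => c * iteratedDeriv 3 (fun y => deriv φ y * p y) x := iter_const_mul hgs c 3
  rw [h1, h2, h3]
  ring

lemma lamN_bound {φ : ℝ → ℝ} (hφs : ContDiff ℝ ∞ φ) (hφp : Function.Periodic φ (2*Real.pi))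
    {n : ℕ} {p : ℝ → ℝ} (hp : InHn n p) :
    L2inner (Aop φ p) p ≤ lamN n φ * (L2norm p)^2 := by
  have hps : ContDiff ℝ ∞ p := hp.smooth
  have hpp : Function.Periodic p (2*Real.pi) := hp.periodic
  have hbdd : BddAbove {r : ℝ | ∃ q : ℝ → ℝ, InHn n q ∧ L2norm q = 1
      ∧ r = L2inner (Aop φ q) q} := by
    refine ⟨(9/2) * (supNorm (iteratedDeriv 2 φ))^2, ?_⟩
    rintro r ⟨q, hq, hqn, rfl⟩
    have hB := boundB hφs hφp hq.smooth hq.periodic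
    rw [hqn] at hB
    nlinarith [sq_nonneg (L2norm (iteratedDeriv 2 q))]
  rcases eq_or_lt_of_le (L2norm_nonneg p) with h0 | h0
  · -- L2norm p = 0
    have hB := boundB hφs hφp hps hpp
    rw [← h0] at hB ⊢
    nlinarith [sq_nonneg (L2norm (iteratedDeriv 2 p))]
  · set c := (L2norm p)⁻¹ with hc
    have hcpos : 0 < c := inv_pos.2 h0
    set q : ℝ → ℝ := fun x => c * p x with hq
    have hqHn : InHn n q := hp.const_mul c
    have hqn : L2norm q = 1 := by
      rw [hq, L2norm_const_mul hps.continuous, abs_of_pos hcpos, hc]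
      field_simp
    have hmem : L2inner (Aop φ q) q ∈ {r : ℝ | ∃ q : ℝ → ℝ, InHn n q ∧ L2norm q = 1
        ∧ r = L2inner (Aop φ q) q} := ⟨q, hqHn, hqn, rfl⟩
    have hle : L2inner (Aop φ q) q ≤ lamN n φ := le_csSup hbdd hmem
    have hscale : L2inner (Aop φ q) q = c^2 * L2inner (Aop φ p) p := by
      rw [hq, Aop_const_mul hφs hps]
      unfold L2inner
      rw [intervalIntegral.integral_congr
        (g := fun x => c^2 * (Aop φ p x * p x)) (fun x _ => by ring),
        intervalIntegral.integral_const_mul]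
    rw [hscale] at hle
    have h2 : c^2 * (L2norm p)^2 = 1 := by
      rw [hc]; field_simp
    have h3 := mul_le_mul_of_nonneg_right hle (sq_nonneg (L2norm p))
    have h4 : c ^ 2 * L2inner (Aop φ p) p * L2norm p ^ 2 = L2inner (Aop φ p) p := by
      linear_combination (L2inner (Aop φ p) p) * h2
    linarith


/-- low-mode estimate:
⟨A_φ p, p⟩ ≤ (1-η)λ_n‖p‖² - (1/2)η‖p_xx‖² + (9/2)η‖φ_xx‖_∞²‖p‖². -/
theorem stmt8 (φ : ℝ → ℝ) (hφ : InH φ) (n : ℕ) (hn : 1 ≤ n)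
    (p : ℝ → ℝ) (hp : InHn n p) (η : ℝ) (hη : η ∈ Set.Icc (0:ℝ) 1) :
    L2inner (Aop φ p) p ≤ (1-η) * lamN n φ * (L2norm p)^2
      - (1/2) * η * (L2norm (iteratedDeriv 2 p))^2
      + (9/2) * η * (supNorm (iteratedDeriv 2 φ))^2 * (L2norm p)^2 := by
  have hφs : ContDiff ℝ ∞ φ := hφ.1.of_le (by simp)
  have hφp : Function.Periodic φ (2*Real.pi) := hφ.2.1
  have hA := lamN_bound hφs hφp hp
  have hB := boundB hφs hφp hp.smooth hp.periodic
  obtain ⟨hη0, hη1⟩ := hη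
  have h1 : (1-η) * L2inner (Aop φ p) p ≤ (1-η) * (lamN n φ * (L2norm p)^2) :=
    mul_le_mul_of_nonneg_left hA (by linarith)
  have h2 : η * L2inner (Aop φ p) p ≤ η * (-(1/2) * (L2norm (iteratedDeriv 2 p))^2
      + (9/2) * (supNorm (iteratedDeriv 2 φ))^2 * (L2norm p)^2) :=
    mul_le_mul_of_nonneg_left hB hη0
  nlinarith
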